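/- Assume the frequencies ω = (ω_j)_{j∈ℤ^d} satisfy Hypotheses (F.1), (F.2) and (F.3), and fix r ∈ ℕ with r ≥ 3. Then there exist τ'_r and γ'_r > 0 such that for every sufficiently large N, every p with 3 ≤ p ≤ r, and every non-resonant multi-index 𝐉 = (J₁,…,J_p) ∈ 𝓙_p^N, the implication holds: if Σ_{l=1}^{p} σ_l ω_{j_l} ≠ 0 then |Σ_{l=1}^{p} σ_l ω_{j_l}| ≥ γ'_r / N^{τ'_r}. -/

import Mathlib

open scoped BigOperators

namespace AG

abbrev Zd (d : ℕ) := Fin d → ℤ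

noncomputable def enorm {d : ℕ} (j : Zd d) : ℝ := Real.sqrt (∑ i, ((j i : ℝ))^2)

abbrev Idx (d : ℕ) := Zd d × Bool

noncomputable def inorm {d : ℕ} (J : Idx d) : ℝ := enorm J.1

def sgn (b : Bool) : ℤ := if b then 1 else -1

noncomputable def sgnC (b : Bool) : ℂ := if b then 1 else -1

def conjIdx {d : ℕ} (J : Idx d) : Idx d := (J.1, !J.2)

abbrev Seq (d : ℕ) := Idx d → ℂ

noncomputable def sobNormSq (d : ℕ) (s : ℝ) (u : Seq d) : ℝ :=
  ∑' J : Idx d, (1 + inorm J) ^ (2 * s) * ‖u J‖ ^ 2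

noncomputable def sobNorm (d : ℕ) (s : ℝ) (u : Seq d) : ℝ := Real.sqrt (sobNormSq d s u)

def MemSob (d : ℕ) (s : ℝ) (u : Seq d) : Prop :=
  Summable (fun J : Idx d => (1 + inorm J) ^ (2 * s) * ‖u J‖ ^ 2)

noncomputable def momentum {d r : ℕ} (Jv : Fin r → Idx d) : Zd d :=
  ∑ l, sgn ((Jv l).2) • ((Jv l).1)

structure Poly (d r : ℕ) where
  coeff : (Fin r → Idx d) → ℂ
  symm : ∀ (π : Equiv.Perm (Fin r)) (Jv : Fin r → Idx d), coeff (Jv ∘ π) = coeff Jv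
  mom : ∀ Jv, coeff Jv ≠ 0 → momentum Jv = 0
  reality : ∀ Jv, (starRingEnd ℂ) (coeff (fun l => conjIdx (Jv l))) = coeff Jv
  bdd : ∃ M : ℝ, ∀ Jv, ‖coeff Jv‖ ≤ M

noncomputable def Poly.norm {d r : ℕ} (P : Poly d r) (R : ℝ) : ℝ :=
  (⨆ Jv : Fin r → Idx d, ‖P.coeff Jv‖) * R ^ r

noncomputable def Poly.eval {d r : ℕ} (P : Poly d r) (u : Seq d) : ℂ :=
  ∑' Jv : Fin r → Idx d, P.coeff Jv * ∏ l, u (Jv l)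

noncomputable def Poly.pderiv {d r : ℕ} (P : Poly d r) (K : Idx d) (u : Seq d) : ℂ :=
  ∑' Jv : Fin r → Idx d, ∑ l : Fin r,
    (if Jv l = K then P.coeff Jv * ∏ m ∈ Finset.univ.erase l, u (Jv m) else 0)

noncomputable def Poly.field {d r : ℕ} (P : Poly d r) (u : Seq d) : Seq d :=
  fun J => Complex.I * sgnC J.2 * P.pderiv (conjIdx J) u

noncomputable def freqSum {d r : ℕ} (ω : Zd d → ℝ) (Jv : Fin r → Idx d) : ℝ :=
  ∑ l, (sgn ((Jv l).2) : ℝ) * ω ((Jv l).1)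



/-! If `|Σ σ_l ω_{j_l}| ≥ 1` there is nothing to prove. Otherwise every index of `𝐉 ∈ 𝓙_p^N`
is bounded by a fixed power `c N^e`, so (F.2) applies at the scale `c N^e`. The indexes of size
`≤ N` contribute `O(N)` to the momentum and `O(N^β)` to the frequency sum, hence so do the (at most
two) large ones. A single large index is then `O(N)` by zero momentum. Two large indexes with equal
signs have `ω_a + ω_b = O(N^β)`, so they are `O(N)` by (F.1). Two with opposite signs lie in
different clusters by (I.2), and the separation in (F.3) bounds `|j_a|^δ` by
`|j_a - j_b| + |ω_a - ω_b| = O(N^β)`. -/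

open Filter

theorem norm_sum_le_of_subset {ι E : Type*} [SeminormedAddCommGroup E] [DecidableEq ι]
    {s t : Finset ι} (hts : t ⊆ s) (g : ι → E) {B : ℝ} (hB : 0 ≤ B)
    (h : ∀ l ∈ s \ t, ‖g l‖ ≤ B) : ‖∑ l ∈ t, g l‖ ≤ ‖∑ l ∈ s, g l‖ + s.card * B := by
  have hrest : ‖∑ l ∈ s \ t, g l‖ ≤ s.card * B := by
    refine (norm_sum_le_of_le _ h).trans ?_
    rw [Finset.sum_const, nsmul_eq_mul]
    gcongr
    exact Finset.sdiff_subset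
  rw [eq_sub_of_add_eq' (Finset.sum_sdiff hts (f := g))]
  exact (norm_sub_le _ _).trans (by gcongr)

theorem le_mul_rpow_of_rpow_le {x D N κ β : ℝ} (hx : 0 ≤ x) (hD : 0 ≤ D) (hN : 0 ≤ N)
    (hκ : 0 < κ) (h : x ^ κ ≤ D * N ^ β) : x ≤ D ^ κ⁻¹ * N ^ (β / κ) :=
  calc x = (x ^ κ) ^ κ⁻¹ := (Real.rpow_rpow_inv hx hκ.ne').symm
    _ ≤ (D * N ^ β) ^ κ⁻¹ := by gcongr
    _ = D ^ κ⁻¹ * N ^ (β / κ) := by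
      rw [Real.mul_rpow hD (Real.rpow_nonneg hN β), ← Real.rpow_mul hN, div_eq_mul_inv]

def HasPolyLowerBound (S : ℝ → Set ℝ) : Prop :=
  ∃ γ > 0, ∃ τ : ℝ, ∀ᶠ N in atTop, ∀ x ∈ S N, γ / N ^ τ ≤ x

namespace HasPolyLowerBound

variable {S T : ℝ → Set ℝ}

theorem mono (hT : HasPolyLowerBound T) (hST : ∀ᶠ N in atTop, S N ⊆ T N) :
    HasPolyLowerBound S := by
  obtain ⟨γ, hγ, τ, hT⟩ := hT
  exact ⟨γ, hγ, τ, by filter_upwards [hT, hST] with N hN hSN x hx using hN x (hSN hx)⟩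

theorem union (hS : HasPolyLowerBound S) (hT : HasPolyLowerBound T) :
    HasPolyLowerBound fun N => S N ∪ T N := by
  obtain ⟨γ, hγ, τ, hS⟩ := hS
  obtain ⟨γ', hγ', τ', hT⟩ := hT
  refine ⟨min γ γ', lt_min hγ hγ', max τ τ', ?_⟩
  filter_upwards [hS, hT, eventually_ge_atTop 1] with N hSN hTN hN x hx
  have weaken : ∀ {γ₀ τ₀ : ℝ}, γ₀ / N ^ τ₀ ≤ x → min γ γ' ≤ γ₀ → τ₀ ≤ max τ τ' →
      min γ γ' / N ^ max τ τ' ≤ x := fun h hγ₀ hτ₀ =>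
    (div_le_div₀ ((lt_min hγ hγ').le.trans hγ₀) hγ₀ (by positivity)
      (Real.rpow_le_rpow_of_exponent_le hN hτ₀)).trans h
  rcases hx with hx | hx
  · exact weaken (hSN x hx) (min_le_left _ _) (le_max_left _ _)
  · exact weaken (hTN x hx) (min_le_right _ _) (le_max_right _ _)

theorem biUnion {ι : Type*} {S : ι → ℝ → Set ℝ} (s : Finset ι)
    (h : ∀ i ∈ s, HasPolyLowerBound (S i)) :
    HasPolyLowerBound fun N => ⋃ i ∈ s, S i N := by
  classical
  induction s using Finset.induction_on with
  | empty => exact ⟨1, one_pos, 0, by simp⟩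
  | insert i s _ ih =>
    simp only [Finset.set_biUnion_insert]
    exact (h i (Finset.mem_insert_self i s)).union
      (ih fun j hj => h j (Finset.mem_insert_of_mem hj))

theorem comp_mul_rpow (hS : HasPolyLowerBound S) {c e : ℝ} (hc : 0 < c) (he : 0 < e) :
    HasPolyLowerBound fun N => S (c * N ^ e) := by
  obtain ⟨γ, hγ, τ, hS⟩ := hS
  refine ⟨γ / c ^ τ, by positivity, e * τ, ?_⟩
  filter_upwards [((tendsto_rpow_atTop he).const_mul_atTop hc).eventually hS,
    eventually_gt_atTop 0] with N hN hN0 x hx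
  rw [div_div, Real.rpow_mul hN0.le, ← Real.mul_rpow hc.le (by positivity)]
  exact hN x hx

end HasPolyLowerBound

theorem hasPolyLowerBound_Ici_one : HasPolyLowerBound fun _ => Set.Ici 1 :=
  ⟨1, one_pos, 0, Eventually.of_forall fun N x hx => by simpa using hx⟩

variable {d : ℕ}

def toEuclidean : Zd d →+ EuclideanSpace ℝ (Fin d) where
  toFun j := WithLp.toLp 2 fun i => (j i : ℝ)
  map_zero' := by ext; simp
  map_add' j k := by ext; simp

theorem enorm_eq_norm (j : Zd d) : enorm j = ‖toEuclidean j‖ := by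
  simp [enorm, EuclideanSpace.norm_eq, toEuclidean]

theorem enorm_nonneg (j : Zd d) : 0 ≤ enorm j := Real.sqrt_nonneg _

theorem enorm_sgn_smul (b : Bool) (j : Zd d) : enorm (sgn b • j) = enorm j := by
  cases b <;> simp [sgn, enorm_eq_norm]

theorem finite_setOf_enorm_le (R : ℝ) : {j : Zd d | enorm j ≤ R}.Finite := by
  refine ((isCompact_closedBall (0 : Zd d) R).finite DiscreteTopology.isDiscrete).subset ?_
  intro j (hj : enorm j ≤ R)
  rw [enorm_eq_norm] at hj
  rw [mem_closedBall_zero_iff, pi_norm_le_iff_of_nonneg ((norm_nonneg _).trans hj)]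
  intro i
  simpa [toEuclidean, Int.norm_eq_abs] using (PiLp.norm_apply_le (toEuclidean j) i).trans hj

theorem abs_sgn (b : Bool) : |(sgn b : ℝ)| = 1 := by
  cases b <;> simp [sgn]

theorem sgn_not (b : Bool) : sgn (!b) = -sgn b := by
  cases b <;> rfl

def FreqGrowth (ω : Zd d → ℝ) (β : ℝ) : Prop :=
  ∃ C₁ : ℝ, 0 < C₁ ∧ ∃ M : ℝ, ∀ j : Zd d, M ≤ enorm j →
    enorm j ^ β / C₁ ≤ ω j ∧ ω j ≤ C₁ * enorm j ^ β

def SeparatedClusters {ι : Type*} (Ω : ι → Set (Zd d)) (ω : Zd d → ℝ) (δ C₃ : ℝ) : Prop :=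
  ∀ α α' : ι, α ≠ α' →
    ∀ i ∈ Ω α, ∀ j ∈ Ω α', C₃ * (enorm i ^ δ + enorm j ^ δ) ≤ enorm (i - j) + |ω i - ω j|

-- `IsAdmissible Ω N Jv` is the membership `Jv ∈ 𝓙_p^N`.
def IsAdmissible {ι : Type*} (Ω : ι → Set (Zd d)) (N : ℝ) {p : ℕ} (Jv : Fin p → Idx d) :
    Prop :=
  momentum Jv = 0 ∧
  (∀ a b c : Fin p, N < inorm (Jv a) → N < inorm (Jv b) → N < inorm (Jv c) →
    a = b ∨ a = c ∨ b = c) ∧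
  (∀ a b : Fin p, a ≠ b → N < inorm (Jv a) → N < inorm (Jv b) →
    ∀ α : ι, (Jv a).1 ∈ Ω α → (Jv b).1 ∈ Ω α → (Jv a).2 = (Jv b).2)

theorem FreqGrowth.exists_abs_le_mul_rpow {ω : Zd d → ℝ} {β : ℝ} (hF1 : FreqGrowth ω β)
    (hβ : 0 ≤ β) : ∃ A, 0 ≤ A ∧ ∀ N, 1 ≤ N → ∀ j, enorm j ≤ N → |ω j| ≤ A * N ^ β := by
  obtain ⟨C₁, hC₁, M, hM⟩ := hF1
  obtain ⟨A₀, hA₀⟩ := ((finite_setOf_enorm_le M).image fun j => |ω j|).bddAbove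
  refine ⟨max A₀ 0 + C₁, by positivity, fun N hN j hj => ?_⟩
  have hNβ : 1 ≤ N ^ β := Real.one_le_rpow hN hβ
  have hω : |ω j| ≤ max A₀ 0 + C₁ * N ^ β := by
    rcases le_or_gt (enorm j) M with hjM | hjM
    · have hωA₀ := hA₀ ⟨j, hjM, rfl⟩
      have hCN : 0 ≤ C₁ * N ^ β := by positivity
      linarith [le_max_left A₀ 0]
    · obtain ⟨hlo, hhi⟩ := hM j hjM.le
      have hω0 : 0 ≤ ω j :=
        (div_nonneg (Real.rpow_nonneg (enorm_nonneg j) β) hC₁.le).trans hlo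
      have hjN : C₁ * enorm j ^ β ≤ C₁ * N ^ β := by gcongr; exact enorm_nonneg j
      linarith [abs_of_nonneg hω0, le_max_right A₀ 0]
  nlinarith [le_max_right A₀ 0]

theorem enorm_sum_le_of_momentum_eq_zero {p : ℕ} {Jv : Fin p → Idx d} (hmom : momentum Jv = 0)
    {t : Finset (Fin p)} {N : ℝ} (hN : 0 ≤ N) (hsmall : ∀ l ∉ t, inorm (Jv l) ≤ N) :
    enorm (∑ l ∈ t, sgn (Jv l).2 • (Jv l).1) ≤ p * N := by
  have := norm_sum_le_of_subset (Finset.subset_univ t)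
    (fun l => toEuclidean (sgn (Jv l).2 • (Jv l).1)) hN fun l hl => by
      rw [← enorm_eq_norm, enorm_sgn_smul]
      exact hsmall l (Finset.mem_sdiff.1 hl).2
  rw [← map_sum, ← map_sum, ← enorm_eq_norm, ← enorm_eq_norm] at this
  change _ ≤ enorm (momentum Jv) + _ at this
  simpa [hmom, enorm] using this

theorem inorm_le_of_momentum_eq_zero {p : ℕ} {Jv : Fin p → Idx d} (hmom : momentum Jv = 0)
    {N : ℝ} (hN : 0 ≤ N) {a : Fin p} (hrest : ∀ l ≠ a, inorm (Jv l) ≤ N) :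
    inorm (Jv a) ≤ p * N := by
  have := enorm_sum_le_of_momentum_eq_zero hmom (t := {a}) hN fun l hl =>
    hrest l (Finset.notMem_singleton.1 hl)
  rwa [Finset.sum_singleton, enorm_sgn_smul] at this

theorem abs_sum_le_of_freqSum (ω : Zd d → ℝ) {p : ℕ} (Jv : Fin p → Idx d) {t : Finset (Fin p)}
    {W : ℝ} (hW : 0 ≤ W) (hsmall : ∀ l ∉ t, |ω (Jv l).1| ≤ W) :
    |∑ l ∈ t, (sgn (Jv l).2 : ℝ) * ω (Jv l).1| ≤ |freqSum ω Jv| + p * W := by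
  have := norm_sum_le_of_subset (Finset.subset_univ t)
    (fun l => (sgn (Jv l).2 : ℝ) * ω (Jv l).1) hW fun l hl => by
      rw [Real.norm_eq_abs, abs_mul, abs_sgn, one_mul]
      exact hsmall l (Finset.mem_sdiff.1 hl).2
  simpa only [Real.norm_eq_abs, Finset.card_univ, Fintype.card_fin, freqSum] using this

theorem rpow_le_of_pair {ι : Type*} {Ω : ι → Set (Zd d)} {ω : Zd d → ℝ} {β δ C₁ C₃ M X Y : ℝ}
    (hC₁ : 0 < C₁) (hlow : ∀ j, M ≤ enorm j → enorm j ^ β / C₁ ≤ ω j) (hC₃ : 0 ≤ C₃)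
    (hsep : SeparatedClusters Ω ω δ C₃) (hpart : ∀ j, ∃ α, j ∈ Ω α) {ja jb : Zd d}
    {sa sb : Bool} (hMa : M ≤ enorm ja) (hMb : M ≤ enorm jb)
    (hcl : ∀ α, ja ∈ Ω α → jb ∈ Ω α → sa = sb)
    (hX : enorm (sgn sa • ja + sgn sb • jb) ≤ X)
    (hY : |(sgn sa : ℝ) * ω ja + sgn sb * ω jb| ≤ Y) :
    enorm ja ^ β / C₁ ≤ Y ∨ C₃ * enorm ja ^ δ ≤ X + Y := by
  by_cases hs : sa = sb
  · subst hs
    have hpos : ∀ j : Zd d, 0 ≤ enorm j ^ β / C₁ := fun j =>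
      div_nonneg (Real.rpow_nonneg (enorm_nonneg j) β) hC₁.le
    have ha := hlow ja hMa
    have hb := hlow jb hMb
    rw [← mul_add, abs_mul, abs_sgn, one_mul,
      abs_of_nonneg (by linarith [hpos ja, hpos jb])] at hY
    exact Or.inl (by linarith [hpos jb])
  · obtain ⟨α, ha⟩ := hpart ja
    obtain ⟨α', hb⟩ := hpart jb
    have hαα' : α ≠ α' := by
      rintro rfl
      exact hs (hcl α ha hb)
    obtain rfl : sb = !sa := by cases sa <;> cases sb <;> simp_all
    rw [sgn_not, neg_smul, ← sub_eq_add_neg, ← smul_sub, enorm_sgn_smul] at hX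
    rw [sgn_not, Int.cast_neg, neg_mul, ← sub_eq_add_neg, ← mul_sub, abs_mul, abs_sgn,
      one_mul] at hY
    have hsepab := hsep α α' hαα' ja ha jb hb
    have hb0 : 0 ≤ C₃ * enorm jb ^ δ := mul_nonneg hC₃ (Real.rpow_nonneg (enorm_nonneg jb) δ)
    exact Or.inr (by linarith [mul_add C₃ (enorm ja ^ δ) (enorm jb ^ δ)])

theorem inorm_le_of_two_large {ι : Type*} {Ω : ι → Set (Zd d)} {ω : Zd d → ℝ}
    {β δ C₁ C₃ M A B N : ℝ} (hβ : 1 ≤ β) (hC₁ : 0 < C₁)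
    (hlow : ∀ j, M ≤ enorm j → enorm j ^ β / C₁ ≤ ω j) (hδ : 0 < δ) (hC₃ : 0 < C₃)
    (hsep : SeparatedClusters Ω ω δ C₃) (hpart : ∀ j, ∃ α, j ∈ Ω α) (hA : 0 ≤ A)
    (hAN : ∀ j, enorm j ≤ N → |ω j| ≤ A * N ^ β) (hN : 1 ≤ N) (hMN : M ≤ N) {p : ℕ}
    (hB : p + 1 + p * A ≤ B) {Jv : Fin p → Idx d} (hJv : IsAdmissible Ω N Jv)
    (hfreq : |freqSum ω Jv| < 1) {a b : Fin p} (hab : a ≠ b) (ha : N < inorm (Jv a))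
    (hb : N < inorm (Jv b)) :
    inorm (Jv a) ≤ (C₁ * B) ^ β⁻¹ * N ^ (β / β) ∨
      inorm (Jv a) ≤ (B / C₃) ^ δ⁻¹ * N ^ (β / δ) := by
  obtain ⟨hmom, hI1, hI2⟩ := hJv
  have hrest : ∀ l ∉ ({a, b} : Finset (Fin p)), inorm (Jv l) ≤ N := by
    intro l hl
    by_contra hlN
    simp only [Finset.mem_insert, Finset.mem_singleton, not_or] at hl
    rcases hI1 a b l ha hb (not_le.1 hlN) with h | h | h
    exacts [hab h, hl.1 h.symm, hl.2 h.symm]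
  have hNβ : N ≤ N ^ β := by simpa using Real.rpow_le_rpow_of_exponent_le hN hβ
  have hX := enorm_sum_le_of_momentum_eq_zero hmom (by linarith) hrest
  have hY := abs_sum_le_of_freqSum ω Jv (mul_nonneg hA (by linarith)) fun l hl =>
    hAN _ (hrest l hl)
  rw [Finset.sum_pair hab] at hX hY
  have hpN : (p : ℝ) * N ≤ p * N ^ β := by gcongr
  have hBN : (p + 1 + p * A) * N ^ β ≤ B * N ^ β := by gcongr
  have hYB : |freqSum ω Jv| + p * (A * N ^ β) ≤ B * N ^ β := by nlinarith
  have hB0 : 0 ≤ B := by linarith [mul_nonneg (Nat.cast_nonneg p) hA]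
  rcases rpow_le_of_pair hC₁ hlow hC₃.le hsep hpart (hMN.trans ha.le) (hMN.trans hb.le)
    (hI2 a b hab ha hb) hX hY with h | h
  · refine .inl (le_mul_rpow_of_rpow_le (x := enorm (Jv a).1) (enorm_nonneg _) (by positivity)
      (by linarith) (by linarith) ?_)
    rw [div_le_iff₀ hC₁] at h
    nlinarith
  · refine .inr (le_mul_rpow_of_rpow_le (x := enorm (Jv a).1) (enorm_nonneg _) (by positivity)
      (by linarith) hδ ?_)
    rw [div_mul_eq_mul_div, le_div_iff₀' hC₃]
    linarith

theorem exists_inorm_le_of_abs_freqSum_lt_one {ι : Type*} {Ω : ι → Set (Zd d)}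
    {ω : Zd d → ℝ} {β : ℝ} (hβ : 1 ≤ β) (hF1 : FreqGrowth ω β)
    (hF3 : ∃ δ, 0 < δ ∧ ∃ C₃, 0 < C₃ ∧ SeparatedClusters Ω ω δ C₃)
    (hpart : ∀ j, ∃ α, j ∈ Ω α) (r : ℕ) :
    ∃ c e : ℝ, 0 < c ∧ 0 < e ∧ ∀ᶠ N in atTop, ∀ p ≤ r, ∀ Jv : Fin p → Idx d,
      IsAdmissible Ω N Jv → |freqSum ω Jv| < 1 → ∀ l, inorm (Jv l) ≤ c * N ^ e := by
  obtain ⟨A, hA, hAN⟩ := hF1.exists_abs_le_mul_rpow (by linarith)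
  obtain ⟨C₁, hC₁, M, hM⟩ := hF1
  obtain ⟨δ, hδ, C₃, hC₃, hsep⟩ := hF3
  set B : ℝ := r + 1 + r * A
  have hB : 0 ≤ B := by positivity
  have hK₁ : 0 ≤ (C₁ * B) ^ β⁻¹ := by positivity
  have hK₂ : 0 ≤ (B / C₃) ^ δ⁻¹ := by positivity
  have hβδ : 0 ≤ β / δ := by positivity
  have hr : (0 : ℝ) ≤ r := Nat.cast_nonneg r
  -- `r`, `1`, and the two powers bound the single-large, small, equal-sign and opposite-sign cases
  set c : ℝ := r + 1 + (C₁ * B) ^ β⁻¹ + (B / C₃) ^ δ⁻¹ with hc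
  set e : ℝ := 1 + β / δ with he
  refine ⟨c, e, by linarith, by linarith, ?_⟩
  filter_upwards [eventually_ge_atTop 1, eventually_ge_atTop M] with N hN hMN
  intro p hpr Jv hJv hfreq a
  have hpr' : (p : ℝ) ≤ r := by exact_mod_cast hpr
  have hBp : (p + 1 + p * A : ℝ) ≤ B := by nlinarith
  have hmono : ∀ K x, K ≤ c → x ≤ e → K * N ^ x ≤ c * N ^ e := fun K x hK hx =>
    mul_le_mul hK (Real.rpow_le_rpow_of_exponent_le hN hx) (by positivity) (by linarith)
  by_cases haN : inorm (Jv a) ≤ N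
  · have := hmono 1 1 (by linarith) (by linarith)
    rw [one_mul, Real.rpow_one] at this
    exact haN.trans this
  by_cases hb : ∃ b ≠ a, N < inorm (Jv b)
  · obtain ⟨b, hba, hbN⟩ := hb
    rcases inorm_le_of_two_large hβ hC₁ (fun j hj => (hM j hj).1) hδ hC₃ hsep hpart hA
      (hAN N hN) hN hMN hBp hJv hfreq hba.symm (not_le.1 haN) hbN with h | h
    · refine h.trans (hmono _ _ (by linarith) ?_)
      rw [div_self (by linarith)]
      linarith
    · exact h.trans (hmono _ _ (by linarith) (by linarith))
  · push Not at hb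
    refine (inorm_le_of_momentum_eq_zero hJv.1 (by linarith) hb).trans ?_
    simpa using hmono p 1 (by linarith) (by linarith)

def smallDivisors (ω : Zd d → ℝ) (p : ℕ) (N : ℝ) : Set ℝ :=
  {x | ∃ Jv : Fin p → Idx d, (∀ l, inorm (Jv l) ≤ N) ∧ freqSum ω Jv ≠ 0 ∧ |freqSum ω Jv| = x}

def admissibleSmallDivisors {ι : Type*} (ω : Zd d → ℝ) (Ω : ι → Set (Zd d)) (r : ℕ) (N : ℝ) :
    Set ℝ :=
  {x | ∃ p, 3 ≤ p ∧ p ≤ r ∧ ∃ Jv : Fin p → Idx d,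
    IsAdmissible Ω N Jv ∧ freqSum ω Jv ≠ 0 ∧ |freqSum ω Jv| = x}

theorem stmt_8_general (d : ℕ) (ω : Zd d → ℝ)
    -- (F.1)
    (β : ℝ) (hβ : 1 < β)
    (hF1 : ∃ C₁ : ℝ, 0 < C₁ ∧ ∃ M : ℝ, ∀ j : Zd d, M ≤ enorm j →
      enorm j ^ β / C₁ ≤ ω j ∧ ω j ≤ C₁ * enorm j ^ β)
    -- (F.2)
    (hF2 : ∀ p : ℕ, 3 ≤ p → ∃ γ : ℝ, 0 < γ ∧ ∃ τ : ℝ, ∃ N₀ : ℝ, ∀ N : ℝ, N₀ ≤ N →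
      ∀ Jv : Fin p → Idx d, (∀ l, inorm (Jv l) ≤ N) →
        freqSum ω Jv ≠ 0 → γ / N ^ τ ≤ |freqSum ω Jv|)
    -- the partition of (F.3)
    (ι : Type) (Ω : ι → Set (Zd d))
    (hpart : ∀ j : Zd d, ∃! α : ι, j ∈ Ω α)
    -- (F.3.2): separation of distinct blocks
    (hF32 : ∃ δ : ℝ, 0 < δ ∧ ∃ C₃ : ℝ, 0 < C₃ ∧ ∀ α α' : ι, α ≠ α' →
      ∀ i ∈ Ω α, ∀ j ∈ Ω α',
        C₃ * (enorm i ^ δ + enorm j ^ δ) ≤ enorm (i - j) + |ω i - ω j|)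
    (r : ℕ) :
    ∃ τ' : ℝ, ∃ γ' : ℝ, 0 < γ' ∧ ∃ N₀ : ℝ, ∀ N : ℝ, N₀ ≤ N →
      ∀ p : ℕ, 3 ≤ p → p ≤ r → ∀ Jv : Fin p → Idx d,
        momentum Jv = 0 →
        -- (I.1): at most two indexes larger than N
        (∀ a b c : Fin p, N < inorm (Jv a) → N < inorm (Jv b) → N < inorm (Jv c) →
          a = b ∨ a = c ∨ b = c) →
        -- (I.2): two large indexes lying in the same cluster carry the same sign
        (∀ a b : Fin p, a ≠ b → N < inorm (Jv a) → N < inorm (Jv b) →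
          ∀ α : ι, (Jv a).1 ∈ Ω α → (Jv b).1 ∈ Ω α → (Jv a).2 = (Jv b).2) →
        freqSum ω Jv ≠ 0 → γ' / N ^ τ' ≤ |freqSum ω Jv| := by
  obtain ⟨c, e, hc, he, hbound⟩ :=
    exists_inorm_le_of_abs_freqSum_lt_one hβ.le hF1 hF32 (fun j => (hpart j).exists) r
  have hF2r : HasPolyLowerBound fun N => ⋃ p ∈ Finset.Icc 3 r, smallDivisors ω p N := by
    refine HasPolyLowerBound.biUnion _ fun p hp => ?_
    obtain ⟨γ, hγ, τ, N₀, h⟩ := hF2 p (Finset.mem_Icc.1 hp).1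
    exact ⟨γ, hγ, τ, eventually_atTop.2 ⟨N₀, fun N hN => by
      rintro _ ⟨Jv, hJv, hne, rfl⟩
      exact h N hN Jv hJv hne⟩⟩
  have hadm : HasPolyLowerBound (admissibleSmallDivisors ω Ω r) := by
    refine (hasPolyLowerBound_Ici_one.union (hF2r.comp_mul_rpow hc he)).mono ?_
    filter_upwards [hbound] with N hN
    rintro _ ⟨p, hp3, hpr, Jv, hJv, hne, rfl⟩
    by_cases h1 : 1 ≤ |freqSum ω Jv|
    · exact Or.inl h1
    · exact Or.inr (Set.mem_biUnion (Finset.mem_coe.2 (Finset.mem_Icc.2 ⟨hp3, hpr⟩))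
        ⟨Jv, hN p hpr Jv hJv (not_le.1 h1), hne, rfl⟩)
  obtain ⟨γ, hγ, τ, hev⟩ := hadm
  obtain ⟨N₀, hN₀⟩ := eventually_atTop.1 hev
  exact ⟨τ, γ, hγ, N₀, fun N hN p hp3 hpr Jv hmom hI1 hI2 hne =>
    hN₀ N hN _ ⟨p, hp3, hpr, Jv, ⟨hmom, hI1, hI2⟩, hne, rfl⟩⟩

/-- Lemma `nr.vera`.
Under Hypotheses (F.1), (F.2) and (F.3) (with partition `Ω`), for any `r ≥ 3` there are
`τ'_r` and `γ'_r > 0` such that, for all sufficiently large `N`, for any `3 ≤ p ≤ r` and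
any non-resonant multi-index `J ∈ 𝓙_p^N` with `Σ σ_l ω_{j_l} ≠ 0`, one has
`|Σ σ_l ω_{j_l}| ≥ γ'_r / N^{τ'_r}`. -/
theorem stmt_8 (d : ℕ) (hd : 1 ≤ d) (ω : Zd d → ℝ)
    -- (F.1)
    (β : ℝ) (hβ : 1 < β)
    (hF1 : ∃ C₁ : ℝ, 0 < C₁ ∧ ∃ M : ℝ, ∀ j : Zd d, M ≤ enorm j →
      enorm j ^ β / C₁ ≤ ω j ∧ ω j ≤ C₁ * enorm j ^ β)
    -- (F.2)
    (hF2 : ∀ p : ℕ, 3 ≤ p → ∃ γ : ℝ, 0 < γ ∧ ∃ τ : ℝ, ∃ N₀ : ℝ, ∀ N : ℝ, N₀ ≤ N →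
      ∀ Jv : Fin p → Idx d, (∀ l, inorm (Jv l) ≤ N) →
        freqSum ω Jv ≠ 0 → γ / N ^ τ ≤ |freqSum ω Jv|)
    -- the partition of (F.3)
    (ι : Type) (Ω : ι → Set (Zd d))
    (hpart : ∀ j : Zd d, ∃! α : ι, j ∈ Ω α)
    -- (F.3.1): each block is either near the origin or dyadic
    (hF31 : ∃ C₁ C₂ : ℝ, ∀ α : ι,
      (∀ j ∈ Ω α, enorm j ≤ C₁) ∨ (∀ j ∈ Ω α, ∀ k ∈ Ω α, enorm j ≤ C₂ * enorm k))
    -- (F.3.2): separation of distinct blocks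
    (hF32 : ∃ δ : ℝ, 0 < δ ∧ ∃ C₃ : ℝ, 0 < C₃ ∧ ∀ α α' : ι, α ≠ α' →
      ∀ i ∈ Ω α, ∀ j ∈ Ω α',
        C₃ * (enorm i ^ δ + enorm j ^ δ) ≤ enorm (i - j) + |ω i - ω j|)
    (r : ℕ) (hr : 3 ≤ r) :
    ∃ τ' : ℝ, ∃ γ' : ℝ, 0 < γ' ∧ ∃ N₀ : ℝ, ∀ N : ℝ, N₀ ≤ N →
      ∀ p : ℕ, 3 ≤ p → p ≤ r → ∀ Jv : Fin p → Idx d,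
        momentum Jv = 0 →
        -- (I.1): at most two indexes larger than N
        (∀ a b c : Fin p, N < inorm (Jv a) → N < inorm (Jv b) → N < inorm (Jv c) →
          a = b ∨ a = c ∨ b = c) →
        -- (I.2): two large indexes lying in the same cluster carry the same sign
        (∀ a b : Fin p, a ≠ b → N < inorm (Jv a) → N < inorm (Jv b) →
          ∀ α : ι, (Jv a).1 ∈ Ω α → (Jv b).1 ∈ Ω α → (Jv a).2 = (Jv b).2) →
        freqSum ω Jv ≠ 0 → γ' / N ^ τ' ≤ |freqSum ω Jv| :=
  stmt_8_general d ω β hβ hF1 hF2 ι Ω hpart hF32 r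

end AG
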